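/- Let L > 0, ν ≥ 0, k > 0, let a, r ∈ ℝ³ with ‖a‖₂ = 1, and let z : [0,∞) × [0,L] → ℝ³ be twice continuously differentiable in (t,x), satisfy the controlled linearized Landau–Lifshitz equation ∂z/∂t = ν z_xx + a × z_xx + k(r − z) on [0,∞) × [0,L], with Neumann boundary conditions z_x(t,0) = z_x(t,L) = 0 for all t ≥ 0. Then for all t ≥ 0, ∫₀ᴸ ‖z(t,x) − r‖₂² dx ≤ e^{−2kt} ∫₀ᴸ ‖z(0,x) − r‖₂² dx; in particular r is an exponentially stable equilibrium of the controlled linearized equation in the L²-norm. (The paper's Theorem 3.9.) -/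

import Mathlib

open scoped RealInnerProductSpace
open Function Set intervalIntegral

/-- Cross product on `ℝ³ = EuclideanSpace ℝ (Fin 3)`. -/
noncomputable def cross3 (u v : EuclideanSpace ℝ (Fin 3)) : EuclideanSpace ℝ (Fin 3) :=
  (WithLp.equiv 2 (Fin 3 → ℝ)).symm
    ![u 1 * v 2 - u 2 * v 1, u 2 * v 0 - u 0 * v 2, u 0 * v 1 - u 1 * v 0]

/-- Second spatial derivative `z_xx` of `z(t, x)`. -/
noncomputable def zxx (z : ℝ → ℝ → EuclideanSpace ℝ (Fin 3)) (t x : ℝ) :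
    EuclideanSpace ℝ (Fin 3) :=
  deriv (deriv (z t)) x

/-!
The energy `Φ(t) = ∫₀ᴸ ‖z(t,x) − r‖² dx` satisfies `Φ' = 2∫⟪z − r, ν z_xx + a × z_xx⟫ − 2kΦ`.
Integrating by parts, the Neumann conditions kill the boundary terms, so the first integral is
`−ν∫‖z_x‖² ≤ 0` and the second is `−∫⟪z_x, a × z_x⟫ = 0` because `a × v ⟂ v`. Hence
`Φ' ≤ −2kΦ`, and Grönwall's inequality gives the decay.
-/

local notation "ℝ³" => EuclideanSpace ℝ (Fin 3)

section Calculus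

variable {E : Type*} [NormedAddCommGroup E]

theorem ContDiff.hasDerivAt_partial_fst [NormedSpace ℝ E] {f : ℝ × ℝ → E} (hf : ContDiff ℝ 1 f)
    (t x : ℝ) : HasDerivAt (fun s => f (s, x)) (fderiv ℝ f (t, x) (1, 0)) t :=
  (hf.differentiable one_ne_zero (t, x)).hasFDerivAt.comp_hasDerivAt t
    ((hasDerivAt_id t).prodMk (hasDerivAt_const t x))

theorem hasDerivAt_intervalIntegral_of_continuous_uncurry [NormedSpace ℝ E] {f f' : ℝ → ℝ → E}
    (hf : Continuous (uncurry f)) (hf' : Continuous (uncurry f'))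
    (hderiv : ∀ t x, HasDerivAt (fun s => f s x) (f' t x) t) (a b t : ℝ) :
    HasDerivAt (fun t => ∫ x in a..b, f t x) (∫ x in a..b, f' t x) t := by
  have hK : IsCompact (Icc (t - 1) (t + 1) ×ˢ uIcc a b) := isCompact_Icc.prod isCompact_uIcc
  obtain ⟨C, hC⟩ := hK.exists_bound_of_continuousOn hf'.continuousOn
  refine (hasDerivAt_integral_of_dominated_loc_of_deriv_le (bound := fun _ => C)
    (Metric.ball_mem_nhds t one_pos) ?_ ?_ ?_ ?_ intervalIntegrable_const ?_).2
  · exact .of_forall fun s => (hf.comp (.prodMk_right s)).aestronglyMeasurable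
  · exact (hf.comp (.prodMk_right t)).intervalIntegrable a b
  · exact (hf'.comp (.prodMk_right t)).aestronglyMeasurable
  · refine .of_forall fun x hx s hs => hC (s, x) ⟨?_, uIoc_subset_uIcc hx⟩
    rw [Metric.mem_ball, Real.dist_eq, abs_lt] at hs
    constructor <;> linarith
  · exact .of_forall fun x _ s _ => hderiv s x

theorem hasDerivAt_integral_norm_sub_sq [InnerProductSpace ℝ E] {z : ℝ → ℝ → E}
    (hz : ContDiff ℝ 1 (fun p : ℝ × ℝ => z p.1 p.2)) (r : E) (a b t : ℝ) :
    HasDerivAt (fun t => ∫ x in a..b, ‖z t x - r‖ ^ 2)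
      (∫ x in a..b, 2 * ⟪z t x - r, deriv (fun s => z s x) t⟫) t := by
  set zₜ := fun t x => fderiv ℝ (fun p : ℝ × ℝ => z p.1 p.2) (t, x) (1, 0)
  have hzt : ∀ t x, HasDerivAt (fun s => z s x) (zₜ t x) t := hz.hasDerivAt_partial_fst
  have hcont : Continuous (uncurry fun t x => ‖z t x - r‖ ^ 2) :=
    (hz.continuous.sub continuous_const).norm.pow 2
  have hcont' : Continuous (uncurry fun t x => 2 * ⟪z t x - r, zₜ t x⟫) :=
    continuous_const.mul ((hz.continuous.sub continuous_const).inner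
      ((hz.continuous_fderiv one_ne_zero).clm_apply continuous_const))
  simpa only [(hzt t _).deriv] using hasDerivAt_intervalIntegral_of_continuous_uncurry hcont
    hcont' (fun t x => ((hzt t x).sub_const r).norm_sq) a b t

theorem integral_inner_apply_deriv_deriv_eq_neg [InnerProductSpace ℝ E] (T : E →L[ℝ] E)
    {w : ℝ → E} {a b : ℝ} (hw : ContDiff ℝ 2 w) (ha : deriv w a = 0) (hb : deriv w b = 0) :
    ∫ x in a..b, ⟪w x, T (deriv (deriv w) x)⟫ = -∫ x in a..b, ⟪deriv w x, T (deriv w x)⟫ := by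
  have hw' : ContDiff ℝ 1 (deriv w) := hw.deriv' (n := 1)
  have hcont₁ : Continuous fun x => ⟪w x, T (deriv (deriv w) x)⟫ :=
    hw.continuous.inner (T.continuous.comp hw'.continuous_deriv_one)
  have hcont₂ : Continuous fun x => ⟪deriv w x, T (deriv w x)⟫ :=
    hw'.continuous.inner (T.continuous.comp hw'.continuous)
  have hftc := integral_eq_sub_of_hasDerivAt
    (f := fun x => ⟪w x, T (deriv w x)⟫)
    (fun x _ => (hw.differentiable two_ne_zero x).hasDerivAt.inner ℝ
      (T.hasFDerivAt.comp_hasDerivAt x (hw'.differentiable one_ne_zero x).hasDerivAt))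
    ((hcont₁.add hcont₂).intervalIntegrable a b)
  rw [integral_add (hcont₁.intervalIntegrable a b)
    (hcont₂.intervalIntegrable a b)] at hftc
  simp only [ha, hb, map_zero, inner_zero_right, sub_zero] at hftc
  linarith

end Calculus

theorem le_exp_mul_of_hasDerivAt_le_mul {f f' : ℝ → ℝ} {K t₀ : ℝ}
    (hf : ∀ t, t₀ ≤ t → HasDerivAt f (f' t) t) (hbound : ∀ t, t₀ ≤ t → f' t ≤ K * f t)
    {t : ℝ} (ht : t₀ ≤ t) : f t ≤ Real.exp (K * (t - t₀)) * f t₀ := by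
  have := le_gronwallBound_of_liminf_deriv_right_le (ε := 0) (b := t)
    (fun x hx => (hf x hx.1).continuousAt.continuousWithinAt)
    (fun x hx _ hr => (hf x hx.1).hasDerivWithinAt.liminf_right_slope_le hr) le_rfl
    (fun x hx => (add_zero (K * f x)).symm ▸ hbound x hx.1) t ⟨ht, le_rfl⟩
  rwa [gronwallBound_ε0, mul_comm] at this

noncomputable def cross3CLM (a : ℝ³) : ℝ³ →L[ℝ] ℝ³ :=
  LinearMap.toContinuousLinearMap
    { toFun := cross3 a
      map_add' := fun u v => by
        ext i
        fin_cases i <;> simp only [cross3, WithLp.equiv_symm_apply, PiLp.add_apply,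
          Matrix.cons_val, Fin.isValue, Fin.zero_eta, Fin.mk_one, Fin.reduceFinMk] <;> ring
      map_smul' := fun c v => by
        ext i
        fin_cases i <;> simp only [cross3, WithLp.equiv_symm_apply, PiLp.smul_apply, smul_eq_mul,
          Real.ringHom_apply, Matrix.cons_val, Fin.isValue, Fin.zero_eta, Fin.mk_one,
          Fin.reduceFinMk] <;> ring }

@[simp]
theorem cross3CLM_apply (a v : ℝ³) : cross3CLM a v = cross3 a v := rfl

theorem inner_cross3_self (a v : ℝ³) : ⟪v, cross3 a v⟫ = 0 := by
  simp only [cross3, WithLp.equiv_symm_apply, PiLp.inner_apply, RCLike.inner_apply,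
    Real.ringHom_apply, Fin.sum_univ_three, Matrix.cons_val, Fin.isValue]
  ring

theorem integral_inner_controlled_landauLifshitz_le {L ν : ℝ} (k : ℝ) (hL : 0 ≤ L) (hν : 0 ≤ ν)
    (a r : ℝ³) {w : ℝ → ℝ³} (hw : ContDiff ℝ 2 w) (hw₀ : deriv w 0 = 0) (hwL : deriv w L = 0) :
    ∫ x in 0..L, ⟪w x - r, ν • deriv (deriv w) x + cross3 a (deriv (deriv w) x) + k • (r - w x)⟫
      ≤ -k * ∫ x in 0..L, ‖w x - r‖ ^ 2 := by
  have hv : ContDiff ℝ 2 (w · - r) := hw.sub contDiff_const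
  have hdv : deriv (w · - r) = deriv w := deriv_sub_const_fun r
  have hdiss := integral_inner_apply_deriv_deriv_eq_neg (.id ℝ ℝ³) hv (hdv ▸ hw₀) (hdv ▸ hwL)
  have hskew := integral_inner_apply_deriv_deriv_eq_neg (cross3CLM a) hv (hdv ▸ hw₀) (hdv ▸ hwL)
  simp only [hdv, ContinuousLinearMap.id_apply, cross3CLM_apply, inner_cross3_self,
    real_inner_self_eq_norm_sq, integral_zero, neg_zero] at hdiss hskew
  have hw'' : Continuous (deriv (deriv w)) := (hw.deriv' (n := 1)).continuous_deriv_one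
  have hcont₁ : Continuous fun x => ⟪w x - r, deriv (deriv w) x⟫ :=
    hv.continuous.inner hw''
  have hcont₂ : Continuous fun x => ⟪w x - r, cross3 a (deriv (deriv w) x)⟫ :=
    hv.continuous.inner ((cross3CLM a).continuous.comp hw'')
  have hcont₃ : Continuous fun x => ‖w x - r‖ ^ 2 := (hw.continuous.sub continuous_const).norm.pow 2
  have hsplit : ∀ x, ⟪w x - r, ν • deriv (deriv w) x + cross3 a (deriv (deriv w) x) + k • (r - w x)⟫
      = ν * ⟪w x - r, deriv (deriv w) x⟫ + ⟪w x - r, cross3 a (deriv (deriv w) x)⟫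
        - k * ‖w x - r‖ ^ 2 := fun x => by
    rw [← neg_sub (w x), smul_neg, ← sub_eq_add_neg, inner_sub_right, inner_add_right,
      real_inner_smul_right, real_inner_smul_right, real_inner_self_eq_norm_sq]
  simp only [hsplit]
  rw [integral_sub (((hcont₁.intervalIntegrable 0 L).const_mul ν).add
      (hcont₂.intervalIntegrable 0 L)) ((hcont₃.intervalIntegrable 0 L).const_mul k),
    integral_add ((hcont₁.intervalIntegrable 0 L).const_mul ν)
      (hcont₂.intervalIntegrable 0 L),
    integral_const_mul, integral_const_mul, hdiss, hskew]
  have := integral_nonneg (μ := MeasureTheory.volume) hL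
    fun x _ => sq_nonneg ‖deriv w x‖
  nlinarith [mul_nonneg hν this]

theorem controlled_linearized_landau_lifshitz_exponential_stability
    (L ν k : ℝ) (hL : 0 < L) (hν : 0 ≤ ν)
    (a r : EuclideanSpace ℝ (Fin 3))
    (z : ℝ → ℝ → EuclideanSpace ℝ (Fin 3))
    (hsmooth : ContDiff ℝ 2 (fun p : ℝ × ℝ => z p.1 p.2))
    (hpde : ∀ t x : ℝ, 0 ≤ t → x ∈ Set.Icc (0 : ℝ) L →
      deriv (fun s => z s x) t
        = ν • zxx z t x + cross3 a (zxx z t x) + k • (r - z t x))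
    (hbc : ∀ t : ℝ, 0 ≤ t → deriv (z t) 0 = 0 ∧ deriv (z t) L = 0) :
    ∀ t : ℝ, 0 ≤ t →
      ∫ x in (0 : ℝ)..L, ‖z t x - r‖ ^ 2
        ≤ Real.exp (-2 * k * t) * ∫ x in (0 : ℝ)..L, ‖z 0 x - r‖ ^ 2 := by
  have hslice : ∀ t, ContDiff ℝ 2 (z t) := fun t =>
    hsmooth.comp (contDiff_const.prodMk contDiff_id)
  have hdecay : ∀ t, 0 ≤ t → ∫ x in (0 : ℝ)..L, 2 * ⟪z t x - r, deriv (fun s => z s x) t⟫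
      ≤ -2 * k * ∫ x in (0 : ℝ)..L, ‖z t x - r‖ ^ 2 := by
    intro t ht
    have hrhs : ∫ x in (0 : ℝ)..L, 2 * ⟪z t x - r, deriv (fun s => z s x) t⟫
        = 2 * ∫ x in (0 : ℝ)..L, ⟪z t x - r, ν • deriv (deriv (z t)) x
            + cross3 a (deriv (deriv (z t)) x) + k • (r - z t x)⟫ := by
      rw [← integral_const_mul]
      refine integral_congr fun x hx => ?_
      rw [uIcc_of_le hL.le] at hx
      rw [hpde t x ht hx, zxx]
    rw [hrhs]
    linarith [integral_inner_controlled_landauLifshitz_le k hL.le hν a r (hslice t) (hbc t ht).1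
      (hbc t ht).2]
  intro t ht
  simpa only [sub_zero] using le_exp_mul_of_hasDerivAt_le_mul
    (fun t _ => hasDerivAt_integral_norm_sub_sq (hsmooth.of_le one_le_two) r 0 L t) hdecay ht
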